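/- Let $c_0, c_1 > 0$ and let $q_1, q_2 : [0,1] \to \mathbb{R}$ be measurable with $c_0 \le q_j(x) \le c_1$ on $[0,1]$, $j=1,2$. For each $k > 0$ let $u_j(\cdot,k)$ be the continuous solution of $u_j(x,k) = 1 + k^2 \int_0^x (x-s) q_j(s) u_j(s,k)\,ds$. Let $h : [0,1] \to \mathbb{R}$ be integrable and let $0 \le z < 1$. Suppose $h(x) \ge 0$ for almost every $x \in [z,1]$ and $\int_0^1 h(x) u_1(x,k) u_2(x,k)\,dx = 0$ for every $k > 0$. Then $h(x) = 0$ for almost every $x \in [z,1]$. -/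

import Mathlib

/-! For `k > 0` each `u_j(·, k)` is positive and nondecreasing on `[0, 1]`, and it grows across
`[z, a]` at least by the factor `1 + c₀ (a - z)² k² / 2`. Split `∫₀¹ h u₁ u₂ = 0` at `z` and `a`
and compare with `W = u₁(z) u₂(z)`: the part over `[0, z]` is at least `-W ∫₀ᶻ |h|`, the part
over `[z, a]` is nonnegative and the part over `[a, 1]` is at least
`W (1 + c₀ (a - z)² k² / 2)² ∫ₐ¹ h`. Letting `k → ∞` forces `∫ₐ¹ h = 0` for every `a > z`, and as
`h ≥ 0` on `[z, 1]` this means `h = 0` a.e. there. -/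

open MeasureTheory intervalIntegral Set Filter

theorem integrableOn_of_forall_mem_Icc {α : Type*} [MeasurableSpace α] {μ : Measure α}
    {f : α → ℝ} {s : Set α} {a b : ℝ} (hs : MeasurableSet s) (hμs : μ s ≠ ⊤)
    (hf : Measurable f) (hfs : ∀ x ∈ s, a ≤ f x ∧ f x ≤ b) : IntegrableOn f s μ :=
  Measure.integrableOn_of_bounded hμs hf.aestronglyMeasurable
    (ae_restrict_of_forall_mem hs fun x hx => abs_le_max_abs_abs (hfs x hx).1 (hfs x hx).2)

theorem mul_intervalIntegral_le_of_intervalIntegral_mul_eq_zero {h w : ℝ → ℝ} {l r z a W E : ℝ}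
    (hh : IntegrableOn h (Icc l r)) (hw : ContinuousOn w (Icc l r))
    (horth : ∫ x in l..r, h x * w x = 0) (hlz : l ≤ z) (hza : z ≤ a) (har : a ≤ r)
    (hh0 : ∀ᵐ x, x ∈ Icc z r → 0 ≤ h x) (hW : 0 < W) (hw0 : ∀ x ∈ Icc l r, 0 ≤ w x)
    (hwW : ∀ x ∈ Icc l z, w x ≤ W) (hwE : ∀ x ∈ Icc a r, W * E ≤ w x) :
    E * ∫ x in a..r, h x ≤ ∫ x in l..z, |h x| := by
  have hint : ∀ {f : ℝ → ℝ}, IntegrableOn f (Icc l r) →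
      ∀ x ∈ Icc l r, ∀ y ∈ Icc l r, IntervalIntegrable f volume x y := fun hf x hx y hy =>
    (hf.mono_set (uIcc_subset_Icc hx hy)).intervalIntegrable
  have hhw := hh.mul_continuousOn hw isCompact_Icc
  have hz : z ∈ Icc l r := ⟨hlz, hza.trans har⟩
  have ha : a ∈ Icc l r := ⟨hlz.trans hza, har⟩
  have hl : l ∈ Icc l r := left_mem_Icc.2 (hlz.trans (hza.trans har))
  have hr : r ∈ Icc l r := right_mem_Icc.2 (hlz.trans (hza.trans har))
  have hsplit :
      (∫ x in l..z, h x * w x) + (∫ x in z..a, h x * w x) + ∫ x in a..r, h x * w x = 0 := by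
    rw [integral_add_adjacent_intervals (hint hhw l hl z hz) (hint hhw z hz a ha),
      integral_add_adjacent_intervals (hint hhw l hl a ha) (hint hhw a ha r hr), horth]
  have hleft : -(W * ∫ x in l..z, |h x|) ≤ ∫ x in l..z, h x * w x := by
    refine neg_le_of_abs_le ((abs_integral_le_integral_abs hlz).trans ?_)
    rw [← intervalIntegral.integral_const_mul]
    refine integral_mono_on hlz (hint hhw l hl z hz).abs
      ((hint hh.abs l hl z hz).const_mul W) fun x hx => ?_
    have hx' : x ∈ Icc l r := ⟨hx.1, hx.2.trans hz.2⟩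
    rw [abs_mul, abs_of_nonneg (hw0 x hx'), mul_comm]
    exact mul_le_mul_of_nonneg_right (hwW x hx) (abs_nonneg _)
  have hmid : 0 ≤ ∫ x in z..a, h x * w x := by
    refine integral_nonneg_of_ae_restrict hza ((ae_restrict_iff' measurableSet_Icc).2 ?_)
    filter_upwards [hh0] with x hx hxI
    exact mul_nonneg (hx ⟨hxI.1, hxI.2.trans har⟩) (hw0 x ⟨hlz.trans hxI.1, hxI.2.trans har⟩)
  have hright : W * (E * ∫ x in a..r, h x) ≤ ∫ x in a..r, h x * w x := by
    rw [← mul_assoc, ← intervalIntegral.integral_const_mul]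
    refine integral_mono_ae_restrict har ((hint hh a ha r hr).const_mul _) (hint hhw a ha r hr)
      ((ae_restrict_iff' measurableSet_Icc).2 ?_)
    filter_upwards [hh0] with x hx hxI
    rw [mul_comm (h x)]
    exact mul_le_mul_of_nonneg_right (hwE x hxI) (hx ⟨hza.trans hxI.1, hxI.2⟩)
  exact le_of_mul_le_mul_left (by linarith) hW

theorem ae_eq_zero_of_forall_intervalIntegral_eq_zero {h : ℝ → ℝ} {z b : ℝ}
    (hh : IntegrableOn h (Icc z b)) (hh0 : ∀ᵐ x, x ∈ Icc z b → 0 ≤ h x)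
    (htail : ∀ a ∈ Ioo z b, ∫ x in a..b, h x = 0) : ∀ᵐ x, x ∈ Icc z b → h x = 0 := by
  have hIoc : ∀ a ∈ Ioo z b, ∀ᵐ x, x ∈ Ioc a b → h x = 0 := by
    intro a ha
    have hsub : Ioc a b ⊆ Icc z b := Ioc_subset_Icc_self.trans (Icc_subset_Icc_left ha.1.le)
    have hnn : 0 ≤ᵐ[volume.restrict (Ioc a b)] h :=
      (ae_restrict_iff' measurableSet_Ioc).2 (hh0.mono fun x hx hxI => hx (hsub hxI))
    rw [← ae_restrict_iff' measurableSet_Ioc]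
    refine (setIntegral_eq_zero_iff_of_nonneg_ae hnn (hh.mono_set hsub)).1 ?_
    rw [← integral_of_le ha.2.le, htail a ha]
  -- rational left endpoints give a countable family of intervals exhausting `(z, b]`
  have hrat : ∀ᵐ x, ∀ p : ℚ, (p : ℝ) ∈ Ioo z b → x ∈ Ioc (p : ℝ) b → h x = 0 :=
    ae_all_iff.2 fun p => by
      by_cases hp : (p : ℝ) ∈ Ioo z b
      · exact (hIoc p hp).mono fun x hx _ => hx
      · exact ae_of_all _ fun x hp' => absurd hp' hp
  filter_upwards [hrat, volume.ae_ne z] with x hx hxz hxI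
  obtain ⟨p, hzp, hpx⟩ := exists_rat_btwn (lt_of_le_of_ne hxI.1 hxz.symm)
  exact hx p ⟨hzp, hpx.trans_le hxI.2⟩ ⟨hpx, hxI.2⟩

theorem nonpos_of_eventually_mul_le {f : ℝ → ℝ} {l : Filter ℝ} [l.NeBot]
    (hf : Tendsto f l atTop) {T M : ℝ} (h : ∀ᶠ k in l, f k * T ≤ M) : T ≤ 0 := by
  by_contra! hT
  obtain ⟨k, hk, hk'⟩ := (h.and ((hf.atTop_mul_const hT).eventually_gt_atTop M)).exists
  linarith

structure IsVolterraSolution (q : ℝ → ℝ) (k : ℝ) (u : ℝ → ℝ) : Prop where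
  continuousOn : ContinuousOn u (Icc 0 1)
  eq : ∀ x ∈ Icc (0 : ℝ) 1, u x = 1 + k ^ 2 * ∫ s in (0 : ℝ)..x, (x - s) * q s * u s

namespace IsVolterraSolution

variable {q u : ℝ → ℝ} {k : ℝ}

theorem one_le_of_pos (hu : IsVolterraSolution q k u) (hq : ∀ x ∈ Icc (0 : ℝ) 1, 0 ≤ q x)
    {x : ℝ} (hx : x ∈ Icc (0 : ℝ) 1) (hpos : ∀ s ∈ Ico 0 x, 0 < u s) : 1 ≤ u x := by
  have hint : 0 ≤ ∫ s in (0 : ℝ)..x, (x - s) * q s * u s := by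
    refine integral_nonneg hx.1 fun s hs => ?_
    rcases hs.2.eq_or_lt with rfl | hsx
    · simp
    · exact mul_nonneg (mul_nonneg (by linarith) (hq s ⟨hs.1, hs.2.trans hx.2⟩))
        (hpos s ⟨hs.1, hsx⟩).le
  rw [hu.eq x hx]
  exact le_add_of_nonneg_right (mul_nonneg (sq_nonneg k) hint)

-- At the first point `t` where `u t ≤ 0`, the equation would give `1 ≤ u t`.
theorem pos (hu : IsVolterraSolution q k u) (hq : ∀ x ∈ Icc (0 : ℝ) 1, 0 ≤ q x) :
    ∀ x ∈ Icc (0 : ℝ) 1, 0 < u x := by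
  by_contra! hneg
  have hS : IsCompact (Icc 0 1 ∩ u ⁻¹' Iic 0) :=
    isCompact_Icc.of_isClosed_subset
      (hu.continuousOn.preimage_isClosed_of_isClosed isClosed_Icc isClosed_Iic) inter_subset_left
  obtain ⟨t, ⟨ht, hut⟩, hleast⟩ := hS.exists_isLeast hneg
  have := hu.one_le_of_pos hq ht fun s hs =>
    lt_of_not_ge fun hus => (hleast ⟨⟨hs.1, hs.2.le.trans ht.2⟩, hus⟩).not_gt hs.2
  linarith [show u t ≤ 0 from hut]

theorem intervalIntegrable_kernel (hu : IsVolterraSolution q k u)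
    (hq : IntegrableOn q (Icc 0 1)) (c : ℝ) {x y : ℝ} (hx : x ∈ Icc (0 : ℝ) 1)
    (hy : y ∈ Icc (0 : ℝ) 1) : IntervalIntegrable (fun s => (c - s) * q s * u s) volume x y :=
  (((hq.continuousOn_mul (continuousOn_const.sub continuousOn_id) isCompact_Icc).mul_continuousOn
    hu.continuousOn isCompact_Icc).mono_set (uIcc_subset_Icc hx hy)).intervalIntegrable

theorem add_integral_le (hu : IsVolterraSolution q k u) (hq : IntegrableOn q (Icc 0 1))
    (hq0 : ∀ x ∈ Icc (0 : ℝ) 1, 0 ≤ q x) {x y : ℝ} (hx : x ∈ Icc (0 : ℝ) 1)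
    (hy : y ∈ Icc (0 : ℝ) 1) (hxy : x ≤ y) :
    u x + k ^ 2 * ∫ s in x..y, (y - s) * q s * u s ≤ u y := by
  have h0 : (0 : ℝ) ∈ Icc (0 : ℝ) 1 := left_mem_Icc.2 zero_le_one
  have hsplit := integral_add_adjacent_intervals (hu.intervalIntegrable_kernel hq y h0 hx)
    (hu.intervalIntegrable_kernel hq y hx hy)
  have hmono : ∫ s in (0 : ℝ)..x, (x - s) * q s * u s ≤ ∫ s in (0 : ℝ)..x, (y - s) * q s * u s :=
    integral_mono_on hx.1 (hu.intervalIntegrable_kernel hq x h0 hx)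
      (hu.intervalIntegrable_kernel hq y h0 hx) fun s hs => by
        have hs01 : s ∈ Icc (0 : ℝ) 1 := ⟨hs.1, hs.2.trans hx.2⟩
        have := mul_nonneg (hq0 s hs01) (hu.pos hq0 s hs01).le
        nlinarith
  rw [hu.eq x hx, hu.eq y hy, ← hsplit, mul_add]
  linarith [mul_le_mul_of_nonneg_left hmono (sq_nonneg k)]

theorem monotoneOn (hu : IsVolterraSolution q k u) (hq : IntegrableOn q (Icc 0 1))
    (hq0 : ∀ x ∈ Icc (0 : ℝ) 1, 0 ≤ q x) : MonotoneOn u (Icc 0 1) := fun x hx y hy hxy => by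
  have hint : 0 ≤ ∫ s in x..y, (y - s) * q s * u s :=
    integral_nonneg hxy fun s hs => by
      have hs01 : s ∈ Icc (0 : ℝ) 1 := ⟨hx.1.trans hs.1, hs.2.trans hy.2⟩
      exact mul_nonneg (mul_nonneg (by linarith [hs.2]) (hq0 s hs01)) (hu.pos hq0 s hs01).le
  linarith [hu.add_integral_le hq hq0 hx hy hxy, mul_nonneg (sq_nonneg k) hint]

theorem mul_one_add_le (hu : IsVolterraSolution q k u) (hq : IntegrableOn q (Icc 0 1))
    (hq0 : ∀ x ∈ Icc (0 : ℝ) 1, 0 ≤ q x) {c z y : ℝ} (hz : z ∈ Icc (0 : ℝ) 1)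
    (hy : y ∈ Icc (0 : ℝ) 1) (hzy : z ≤ y) (hc : ∀ s ∈ Icc z y, c ≤ q s) :
    u z * (1 + c * (y - z) ^ 2 / 2 * k ^ 2) ≤ u y := by
  have hlow : ∫ s in z..y, (y - s) * c * u z ≤ ∫ s in z..y, (y - s) * q s * u s := by
    refine integral_mono_on hzy
      ((by fun_prop : Continuous fun s => (y - s) * c * u z).intervalIntegrable z y)
      (hu.intervalIntegrable_kernel hq y hz hy) fun s hs => ?_
    have hs01 : s ∈ Icc (0 : ℝ) 1 := ⟨hz.1.trans hs.1, hs.2.trans hy.2⟩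
    have hys : 0 ≤ y - s := by linarith [hs.2]
    gcongr
    · exact (hu.pos hq0 z hz).le
    · exact mul_nonneg hys (hq0 s hs01)
    · exact hc s hs
    · exact hu.monotoneOn hq hq0 hz hs01 hs.1
  have hlin : ∫ s in z..y, (y - s) * c * u z = (y - z) ^ 2 / 2 * c * u z := by
    rw [intervalIntegral.integral_mul_const, intervalIntegral.integral_mul_const,
      intervalIntegral.integral_comp_sub_left (fun s => s) y, integral_id]
    ring
  calc u z * (1 + c * (y - z) ^ 2 / 2 * k ^ 2)
      = u z + k ^ 2 * ∫ s in z..y, (y - s) * c * u z := by rw [hlin]; ring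
    _ ≤ u z + k ^ 2 * ∫ s in z..y, (y - s) * q s * u s := by gcongr
    _ ≤ u y := hu.add_integral_le hq hq0 hz hy hzy

theorem sq_mul_intervalIntegral_le {q₁ q₂ u₁ u₂ h : ℝ → ℝ} {c z a : ℝ}
    (hu₁ : IsVolterraSolution q₁ k u₁) (hu₂ : IsVolterraSolution q₂ k u₂)
    (hq₁ : IntegrableOn q₁ (Icc 0 1)) (hq₂ : IntegrableOn q₂ (Icc 0 1)) (hc : 0 ≤ c)
    (hcq₁ : ∀ x ∈ Icc (0 : ℝ) 1, c ≤ q₁ x) (hcq₂ : ∀ x ∈ Icc (0 : ℝ) 1, c ≤ q₂ x)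
    (hh : IntegrableOn h (Icc 0 1)) (hz : 0 ≤ z) (hza : z ≤ a) (ha : a ≤ 1)
    (hh0 : ∀ᵐ x, x ∈ Icc z 1 → 0 ≤ h x) (horth : ∫ x in (0 : ℝ)..1, h x * u₁ x * u₂ x = 0) :
    (1 + c * (a - z) ^ 2 / 2 * k ^ 2) ^ 2 * ∫ x in a..1, h x ≤ ∫ x in (0 : ℝ)..z, |h x| := by
  have hq₁0 : ∀ x ∈ Icc (0 : ℝ) 1, 0 ≤ q₁ x := fun x hx => hc.trans (hcq₁ x hx)
  have hq₂0 : ∀ x ∈ Icc (0 : ℝ) 1, 0 ≤ q₂ x := fun x hx => hc.trans (hcq₂ x hx)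
  have hz01 : z ∈ Icc (0 : ℝ) 1 := ⟨hz, hza.trans ha⟩
  have ha01 : a ∈ Icc (0 : ℝ) 1 := ⟨hz.trans hza, ha⟩
  have hG : 0 ≤ 1 + c * (a - z) ^ 2 / 2 * k ^ 2 :=
    add_nonneg zero_le_one (mul_nonneg (div_nonneg (mul_nonneg hc (sq_nonneg _)) zero_le_two)
      (sq_nonneg k))
  have hgrowth : ∀ {q u : ℝ → ℝ}, IsVolterraSolution q k u → IntegrableOn q (Icc 0 1) →
      (∀ x ∈ Icc (0 : ℝ) 1, c ≤ q x) → ∀ x ∈ Icc a 1,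
        u z * (1 + c * (a - z) ^ 2 / 2 * k ^ 2) ≤ u x := fun hu hq hcq x hx =>
    (hu.mul_one_add_le hq (fun y hy => hc.trans (hcq y hy)) hz01 ha01 hza
      fun s hs => hcq s ⟨hz.trans hs.1, hs.2.trans ha⟩).trans
      (hu.monotoneOn hq (fun y hy => hc.trans (hcq y hy)) ha01 ⟨ha01.1.trans hx.1, hx.2⟩ hx.1)
  refine mul_intervalIntegral_le_of_intervalIntegral_mul_eq_zero (w := fun x => u₁ x * u₂ x) hh
    (hu₁.continuousOn.mul hu₂.continuousOn) (by simpa only [mul_assoc] using horth) hz hza ha hh0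
    (mul_pos (hu₁.pos hq₁0 z hz01) (hu₂.pos hq₂0 z hz01))
    (fun x hx => (mul_pos (hu₁.pos hq₁0 x hx) (hu₂.pos hq₂0 x hx)).le) (fun x hx => ?_)
    (fun x hx => ?_)
  · have hx01 : x ∈ Icc (0 : ℝ) 1 := ⟨hx.1, hx.2.trans hz01.2⟩
    exact mul_le_mul (hu₁.monotoneOn hq₁ hq₁0 hx01 hz01 hx.2)
      (hu₂.monotoneOn hq₂ hq₂0 hx01 hz01 hx.2) (hu₂.pos hq₂0 x hx01).le (hu₁.pos hq₁0 z hz01).le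
  · have hx01 : x ∈ Icc (0 : ℝ) 1 := ⟨ha01.1.trans hx.1, hx.2⟩
    calc u₁ z * u₂ z * (1 + c * (a - z) ^ 2 / 2 * k ^ 2) ^ 2
        = (u₁ z * (1 + c * (a - z) ^ 2 / 2 * k ^ 2)) *
            (u₂ z * (1 + c * (a - z) ^ 2 / 2 * k ^ 2)) := by ring
      _ ≤ u₁ x * u₂ x := mul_le_mul (hgrowth hu₁ hq₁ hcq₁ x hx) (hgrowth hu₂ hq₂ hcq₂ x hx)
          (mul_nonneg (hu₂.pos hq₂0 z hz01).le hG) (hu₁.pos hq₁0 x hx01).le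

end IsVolterraSolution

theorem orthogonality_kills_h_on_last_interval_general
    (c0 c1 : ℝ) (hc0 : 0 < c0)
    (q1 q2 : ℝ → ℝ) (hq1_meas : Measurable q1) (hq2_meas : Measurable q2)
    (hq1_bnd : ∀ x ∈ Set.Icc (0:ℝ) 1, c0 ≤ q1 x ∧ q1 x ≤ c1)
    (hq2_bnd : ∀ x ∈ Set.Icc (0:ℝ) 1, c0 ≤ q2 x ∧ q2 x ≤ c1)
    (u1 u2 : ℝ → ℝ → ℝ)
    (hu1_cont : ∀ k > 0, ContinuousOn (u1 k) (Set.Icc (0:ℝ) 1))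
    (hu2_cont : ∀ k > 0, ContinuousOn (u2 k) (Set.Icc (0:ℝ) 1))
    (hu1 : ∀ k > 0, ∀ x ∈ Set.Icc (0:ℝ) 1,
      u1 k x = 1 + k ^ 2 * ∫ s in (0:ℝ)..x, (x - s) * q1 s * u1 k s)
    (hu2 : ∀ k > 0, ∀ x ∈ Set.Icc (0:ℝ) 1,
      u2 k x = 1 + k ^ 2 * ∫ s in (0:ℝ)..x, (x - s) * q2 s * u2 k s)
    (h : ℝ → ℝ) (hh_int : IntegrableOn h (Set.Icc (0:ℝ) 1))
    (z : ℝ) (hz0 : 0 ≤ z)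
    (hh_nonneg : ∀ᵐ x, x ∈ Set.Icc z 1 → 0 ≤ h x)
    (horth : ∀ k > (0:ℝ), ∫ x in (0:ℝ)..1, h x * u1 k x * u2 k x = 0) :
    ∀ᵐ x, x ∈ Set.Icc z 1 → h x = 0 := by
  have hq1 := integrableOn_of_forall_mem_Icc (μ := volume) measurableSet_Icc
    measure_Icc_lt_top.ne hq1_meas hq1_bnd
  have hq2 := integrableOn_of_forall_mem_Icc (μ := volume) measurableSet_Icc
    measure_Icc_lt_top.ne hq2_meas hq2_bnd
  refine ae_eq_zero_of_forall_intervalIntegral_eq_zero (hh_int.mono_set (Icc_subset_Icc_left hz0))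
    hh_nonneg fun a ha => le_antisymm ?_ ?_
  · have hC : 0 < c0 * (a - z) ^ 2 / 2 := by have := sub_pos.2 ha.1; positivity
    have hgrowth : Tendsto (fun k : ℝ => (1 + c0 * (a - z) ^ 2 / 2 * k ^ 2) ^ 2) atTop atTop :=
      (tendsto_pow_atTop two_ne_zero).comp
        (tendsto_atTop_add_const_left _ 1 ((tendsto_pow_atTop two_ne_zero).const_mul_atTop hC))
    refine nonpos_of_eventually_mul_le (M := ∫ x in (0 : ℝ)..z, |h x|) hgrowth ?_
    filter_upwards [eventually_gt_atTop 0] with k hk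
    exact IsVolterraSolution.sq_mul_intervalIntegral_le ⟨hu1_cont k hk, hu1 k hk⟩
      ⟨hu2_cont k hk, hu2 k hk⟩ hq1 hq2 hc0.le (fun x hx => (hq1_bnd x hx).1)
      (fun x hx => (hq2_bnd x hx).1) hh_int hz0 ha.1.le ha.2.le hh_nonneg (horth k hk)
  · exact integral_nonneg_of_ae_restrict ha.2.le ((ae_restrict_iff' measurableSet_Icc).2
      (hh_nonneg.mono fun x hx hxI => hx ⟨ha.1.le.trans hxI.1, hxI.2⟩))

/-- If `h` is integrable on `[0,1]`, nonnegative a.e. on `[z,1]`, and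
orthogonal to all products `u₁(·,k)u₂(·,k)` of Volterra solutions, then `h = 0`
a.e. on `[z,1]`. -/
theorem orthogonality_kills_h_on_last_interval
    (c0 c1 : ℝ) (hc0 : 0 < c0) (hc1 : 0 < c1)
    (q1 q2 : ℝ → ℝ) (hq1_meas : Measurable q1) (hq2_meas : Measurable q2)
    (hq1_bnd : ∀ x ∈ Set.Icc (0:ℝ) 1, c0 ≤ q1 x ∧ q1 x ≤ c1)
    (hq2_bnd : ∀ x ∈ Set.Icc (0:ℝ) 1, c0 ≤ q2 x ∧ q2 x ≤ c1)
    (u1 u2 : ℝ → ℝ → ℝ)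
    (hu1_cont : ∀ k > 0, ContinuousOn (u1 k) (Set.Icc (0:ℝ) 1))
    (hu2_cont : ∀ k > 0, ContinuousOn (u2 k) (Set.Icc (0:ℝ) 1))
    (hu1 : ∀ k > 0, ∀ x ∈ Set.Icc (0:ℝ) 1,
      u1 k x = 1 + k ^ 2 * ∫ s in (0:ℝ)..x, (x - s) * q1 s * u1 k s)
    (hu2 : ∀ k > 0, ∀ x ∈ Set.Icc (0:ℝ) 1,
      u2 k x = 1 + k ^ 2 * ∫ s in (0:ℝ)..x, (x - s) * q2 s * u2 k s)
    (h : ℝ → ℝ) (hh_int : IntegrableOn h (Set.Icc (0:ℝ) 1))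
    (z : ℝ) (hz0 : 0 ≤ z) (hz1 : z < 1)
    (hh_nonneg : ∀ᵐ x, x ∈ Set.Icc z 1 → 0 ≤ h x)
    (horth : ∀ k > (0:ℝ), ∫ x in (0:ℝ)..1, h x * u1 k x * u2 k x = 0) :
    ∀ᵐ x, x ∈ Set.Icc z 1 → h x = 0 :=
  orthogonality_kills_h_on_last_interval_general c0 c1 hc0 q1 q2 hq1_meas hq2_meas hq1_bnd hq2_bnd
    u1 u2 hu1_cont hu2_cont hu1 hu2 h hh_int z hz0 hh_nonneg horth
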